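/- Fix n ≥ 1 and X ≥ 2, and consider the family 𝔉 of weighted grid embeddings G_M of all n×n matrices M with integer entries in {0,…,X}. Suppose a labeling ℓ assigns to each G_M ∈ 𝔉 and each vertex v of G_M a finite binary string of length at most L, and there is a function f on pairs of binary strings such that f(ℓ(G_M,u), ℓ(G_M,v)) = d_{G_M}(u,v) for every G_M ∈ 𝔉 and all vertices u, v of G_M. Then 2^{2n(L+1)} ≥ (X+1)^{n²}; in particular L ≥ (n/2)·log₂(X+1) − 1. -/

import Mathlib

/-- Vertices of the grid embedding: `a j` (top terminals), `b i` (right terminals),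
`u i j` (grid intersections), `v i j` (subdivision vertex above `u i j`),
`w i j` (subdivision vertex to the right of `u i j`), `x i j` (shortcut vertices).
Indices are 1-based natural numbers; out-of-range vertices are isolated. -/
inductive GV : Type
  | a (j : ℕ)
  | b (i : ℕ)
  | u (i j : ℕ)
  | v (i j : ℕ)
  | w (i j : ℕ)
  | x (i j : ℕ)
deriving DecidableEq

/-- One-directional edge weights of the grid embedding of a boolean `R × C` matrix `M`;
`⊤` means "no edge". -/
def dirW (R C : ℕ) (M : ℕ → ℕ → Bool) : GV → GV → ℕ∞
  | GV.a j, GV.v i' j' =>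
      if i' = 1 ∧ j' = j ∧ 1 ≤ j ∧ j ≤ C then ((2 * j - 1 : ℕ) : ℕ∞) else ⊤
  | GV.v i j, GV.u i' j' =>
      if i' = i ∧ j' = j ∧ 1 ≤ i ∧ i ≤ R ∧ 1 ≤ j ∧ j ≤ C then 1 else ⊤
  | GV.u i j, GV.v i' j' =>
      if i' = i + 1 ∧ j' = j ∧ 1 ≤ i ∧ i + 1 ≤ R ∧ 1 ≤ j ∧ j ≤ C then
        ((2 * j - 1 : ℕ) : ℕ∞) else ⊤
  | GV.u i j, GV.w i' j' =>
      if i' = i ∧ j' = j ∧ 1 ≤ i ∧ i ≤ R ∧ 1 ≤ j ∧ j ≤ C then 2 else ⊤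
  | GV.w i j, GV.u i' j' =>
      if i' = i ∧ j' = j + 1 ∧ 1 ≤ i ∧ i ≤ R ∧ 1 ≤ j ∧ j + 1 ≤ C then
        ((2 * R - 2 : ℕ) : ℕ∞) else ⊤
  | GV.w i j, GV.b i' =>
      if i' = i ∧ j = C ∧ 1 ≤ i ∧ i ≤ R ∧ 1 ≤ C then ((2 * R - 2 : ℕ) : ℕ∞) else ⊤
  | GV.v i j, GV.x i' j' =>
      if i' = i ∧ j' = j ∧ M i j = true ∧ 1 ≤ i ∧ i ≤ R ∧ 1 ≤ j ∧ j ≤ C then 1 else ⊤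
  | GV.x i j, GV.w i' j' =>
      if i' = i ∧ j' = j ∧ M i j = true ∧ 1 ≤ i ∧ i ≤ R ∧ 1 ≤ j ∧ j ≤ C then 1 else ⊤
  | _, _ => ⊤

/-- Symmetrization of a one-directional weight function. -/
noncomputable def symW {V : Type} (f : V → V → ℕ∞) : V → V → ℕ∞ := fun p q => min (f p q) (f q p)

/-- Edge weights of the grid embedding of a boolean matrix `M`. -/
noncomputable def gridW (R C : ℕ) (M : ℕ → ℕ → Bool) : GV → GV → ℕ∞ := symW (dirW R C M)

/-- One-directional edge weights of the weighted grid embedding of an `R × C` matrix `M`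
with entries in `{0, …, X}`: the grid embedding of the all-ones boolean matrix with every
weight multiplied by `X²`, and the weight of each edge `(v i j, x i j)` increased by `M i j`. -/
def dirWt (R C X : ℕ) (M : ℕ → ℕ → ℕ) : GV → GV → ℕ∞ := fun p q =>
  (X : ℕ∞) ^ 2 * dirW R C (fun _ _ => true) p q +
    (match p, q with
      | GV.v i j, GV.x i' j' => if i' = i ∧ j' = j then (M i j : ℕ∞) else 0
      | _, _ => 0)

/-- Edge weights of the weighted grid embedding of `M`. -/
noncomputable def wgridW (R C X : ℕ) (M : ℕ → ℕ → ℕ) : GV → GV → ℕ∞ := symW (dirWt R C X M)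

/-- Edge weights of the mirrored grid `G'`: the (weighted, scaled by `X²`) grid embedding
with all shortcut vertices removed.  Mirroring is a weight-preserving graph isomorphism, so
the mirrored copy is represented by the same abstract graph. -/
noncomputable def mirW (R C X : ℕ) : GV → GV → ℕ∞ :=
  fun p q => (X : ℕ∞) ^ 2 * gridW R C (fun _ _ => false) p q

/-- Total weight of a walk, given as its list of visited vertices. -/
def cost {V : Type} (W : V → V → ℕ∞) : List V → ℕ∞
  | p :: q :: l => W p q + cost W (q :: l)
  | _ => 0

/-- Shortest-path distance: the least total weight of a walk from `s` to `t`
(`⊤` if there is none; walks through a non-edge have cost `⊤`). -/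
noncomputable def gdist {V : Type} (W : V → V → ℕ∞) (s t : V) : ℕ∞ :=
  sInf {c | ∃ l : List V, l.head? = some s ∧ l.getLast? = some t ∧ cost W l = c}

/-!
The distance from `a s` to `b i` in the weighted grid embedding of `M` is
`X²·(2is + 2n(n+1-s) - 1) + M i s`. The walk down column `s`, across the shortcut `x i s` and
along row `i` has this length. Conversely, `X²·ψ + M i s · 𝟙_R` is a feasible potential, where `ψ`
is a potential of the unscaled grid that is tight along this walk and `R` is the part of row `i`
behind the shortcut: every edge entering `R` other than `v i s → x i s` is slack for `ψ` by one
unit, which after scaling absorbs `M i s ≤ X ≤ X²`. So the labels of `a 1, …, a n, b 1, …, b n`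
determine `M`, and as there are fewer than `2^(L+1)` strings of length at most `L`, counting the
`(X+1)^(n²)` matrices gives the bound.
-/

section Walks

variable {V : Type} (W : V → V → ℕ∞)

theorem cost_append_of_getLast? {l t : List V} {m : V} (hl : l.getLast? = some m) :
    cost W (l ++ t) = cost W l + cost W (m :: t) := by
  induction l with
  | nil => simp at hl
  | cons p l ih =>
    cases l with
    | nil =>
      obtain rfl : p = m := by simpa using hl
      simp [cost]
    | cons q l =>
      rw [List.getLast?_cons_cons] at hl
      simp only [List.cons_append, cost] at ih ⊢
      rw [ih hl, add_assoc]

theorem gdist_le_cost {l : List V} {s t : V} (hs : l.head? = some s) (ht : l.getLast? = some t) :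
    gdist W s t ≤ cost W l :=
  sInf_le ⟨l, hs, ht, rfl⟩

theorem gdist_le_weight (p q : V) : gdist W p q ≤ W p q := by
  simpa [cost] using gdist_le_cost W (l := [p, q]) rfl rfl

theorem exists_cost_eq_gdist {s t : V} (h : gdist W s t ≠ ⊤) :
    ∃ l : List V, l.head? = some s ∧ l.getLast? = some t ∧ cost W l = gdist W s t := by
  have hne : {c | ∃ l : List V, l.head? = some s ∧ l.getLast? = some t ∧ cost W l = c}.Nonempty :=
    Set.nonempty_iff_ne_empty.mpr fun hemp => h (by rw [gdist, hemp, sInf_empty])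
  exact csInf_mem hne

theorem gdist_triangle (s m t : V) : gdist W s t ≤ gdist W s m + gdist W m t := by
  rcases eq_or_ne (gdist W s m) ⊤ with h₁ | h₁
  · simp [h₁]
  rcases eq_or_ne (gdist W m t) ⊤ with h₂ | h₂
  · simp [h₂]
  obtain ⟨l₁, hs, hm, hc₁⟩ := exists_cost_eq_gdist W h₁
  obtain ⟨_ | ⟨m', l₂⟩, hm', ht, hc₂⟩ := exists_cost_eq_gdist W h₂
  · simp at hm'
  obtain rfl : m' = m := by simpa using hm'
  rw [← hc₁, ← hc₂, ← cost_append_of_getLast? W hm]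
  apply gdist_le_cost
  · cases l₁ <;> simp_all
  · cases l₂ <;> simp_all [List.getLast?_append]

theorem toNat_sub_le_cost (φ : V → ℤ) (hφ : ∀ p q, ((φ q - φ p).toNat : ℕ∞) ≤ W p q) :
    ∀ (l : List V) (s t : V), l.head? = some s → l.getLast? = some t →
      ((φ t - φ s).toNat : ℕ∞) ≤ cost W l
  | [], _, _, hs, _ => by simp at hs
  | [p], s, t, hs, ht => by
    obtain rfl : p = s := by simpa using hs
    obtain rfl : p = t := by simpa using ht
    simp
  | p :: q :: l, s, t, hs, ht => by
    obtain rfl : p = s := by simpa using hs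
    rw [List.getLast?_cons_cons] at ht
    calc ((φ t - φ p).toNat : ℕ∞) ≤ ((φ q - φ p).toNat + (φ t - φ q).toNat : ℕ) := by
          gcongr; omega
      _ ≤ W p q + cost W (q :: l) := by
          push_cast; exact add_le_add (hφ p q) (toNat_sub_le_cost φ hφ _ q t rfl ht)

theorem toNat_sub_le_gdist (φ : V → ℤ) (hφ : ∀ p q, ((φ q - φ p).toNat : ℕ∞) ≤ W p q)
    (s t : V) : ((φ t - φ s).toNat : ℕ∞) ≤ gdist W s t :=
  le_sInf fun _ ⟨l, hs, ht, hc⟩ => hc ▸ toNat_sub_le_cost W φ hφ l s t hs ht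

theorem toNat_sub_le_symW (φ : V → ℤ) (hφ : ∀ p q, (|φ q - φ p|.toNat : ℕ∞) ≤ W p q)
    (p q : V) : ((φ q - φ p).toNat : ℕ∞) ≤ symW W p q := by
  have h : ∀ p q : V, ((φ q - φ p).toNat : ℕ∞) ≤ (|φ q - φ p|.toNat : ℕ∞) := fun p q =>
    Nat.cast_le.mpr (Int.toNat_le_toNat (le_abs_self _))
  refine le_min ((h p q).trans (hφ p q)) ((h p q).trans ?_)
  rw [abs_sub_comm]
  exact hφ q p

end Walks

-- Up to the `±1` corrections of `gridPot`: the distance from `a s` to the grid point `(i, j)` of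
-- the unscaled grid if `s ≤ j`, a lower bound for it if `j < s`. Row `0` is that of the `a j`.
def levelPot (n s i j : ℕ) : ℤ :=
  if j ≤ s then 2 * j * i + 2 * n * (s - j) else 2 * s * i + 2 * n * (j - s)

theorem levelPot_succ_row (n s i j : ℕ) :
    levelPot n s (i + 1) j = levelPot n s i j + 2 * min j s := by
  unfold levelPot
  split_ifs with h
  · rw [min_eq_left (by exact_mod_cast h)]; push_cast; ring
  · rw [min_eq_right (by exact_mod_cast (not_le.mp h).le)]; push_cast; ring

theorem levelPot_succ_col (n s i j : ℕ) :
    levelPot n s i (j + 1) = levelPot n s i j + if j < s then (2 * i - 2 * n : ℤ) else 2 * n := by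
  unfold levelPot
  rcases lt_trichotomy j s with h | rfl | h
  · rw [if_pos h, if_pos h.le, if_pos (by omega)]; push_cast; ring
  · simp
  · rw [if_neg (by omega), if_neg (by omega), if_neg (by omega)]; push_cast; ring

def gridPot (n s : ℕ) : GV → ℤ
  | .a j => levelPot n s 0 j
  | .b i => levelPot n s i (n + 1) - 1
  | .u i j => levelPot n s i j - if s < j then 1 else 0
  | .v i j => levelPot n s i j - if j ≤ s then 1 else 0
  | .w i j => levelPot n s i j + if s ≤ j then 1 else 0
  | .x i j => levelPot n s i j + if s < j then 1 else 0

theorem abs_gridPot_sub_le {n s : ℕ} (hs : s ≤ n) {p q : GV} {w : ℕ}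
    (h : dirW n n (fun _ _ => true) p q = w) : |gridPot n s q - gridPot n s p| ≤ w := by
  cases p <;> cases q <;> simp only [dirW] at h <;> (try split_ifs at h with hc) <;>
    (try simp at h; done)
  all_goals
    norm_cast at h
    obtain ⟨rfl, rfl, hc⟩ := hc
    simp only [gridPot, levelPot_succ_row, levelPot_succ_col]
    rw [abs_le]
    split_ifs <;> omega

-- Every edge entering this set, except `v i₀ s → x i₀ s`, is slack for `gridPot n s`.
def AfterShortcut (i₀ s : ℕ) : GV → Prop
  | .x i j => i = i₀ ∧ j = s
  | .w i j => i = i₀ ∧ s ≤ j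
  | .u i j => i = i₀ ∧ s < j
  | .b i => i = i₀
  | _ => False

theorem gridPot_sub_add_one_le_of_enter {n s i₀ : ℕ} {p q : GV} {w : ℕ}
    (hw : dirW n n (fun _ _ => true) p q = w ∨ dirW n n (fun _ _ => true) q p = w)
    (hq : AfterShortcut i₀ s q) (hp : ¬ AfterShortcut i₀ s p)
    (hpq : ¬ (p = .v i₀ s ∧ q = .x i₀ s)) :
    gridPot n s q - gridPot n s p + 1 ≤ w := by
  rcases hw with h | h <;>
  cases p <;> cases q <;> simp only [dirW] at h <;> (try split_ifs at h with hc) <;>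
    (try simp at h; done)
  all_goals norm_cast at h
  all_goals
    obtain ⟨rfl, rfl, hc⟩ := hc
    simp only [AfterShortcut, GV.v.injEq, GV.x.injEq] at hp hq hpq
  all_goals
    simp only [gridPot, levelPot_succ_row, levelPot_succ_col]
    split_ifs <;> omega

theorem dirWt_eq_add (n X : ℕ) (M : ℕ → ℕ → ℕ) (p q : GV) :
    ∃ e : ℕ, dirWt n n X M p q = X ^ 2 * dirW n n (fun _ _ => true) p q + e ∧
      ∀ i j, p = .v i j → q = .x i j → e = M i j := by
  cases p <;> cases q
  case v.x i j i' j' =>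
    refine ⟨if i' = i ∧ j' = j then M i j else 0, ?_, ?_⟩
    · simp only [dirWt]; split_ifs <;> simp
    · simp only [GV.v.injEq, GV.x.injEq]; rintro _ _ ⟨rfl, rfl⟩ ⟨rfl, rfl⟩; simp
  all_goals exact ⟨0, by simp [dirWt], by simp⟩

noncomputable def weightedPot (n X s i₀ m : ℕ) (p : GV) : ℤ :=
  X ^ 2 * gridPot n s p + {q | AfterShortcut i₀ s q}.indicator (fun _ => (m : ℤ)) p

theorem mul_add_le_mul_add_of_lex {Y a w μ e : ℤ} (hY : 0 ≤ Y) (he : 0 ≤ e) (ha : a ≤ w)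
    (hμ : μ ≤ e ∨ a + 1 ≤ w ∧ μ ≤ Y) : Y * a + μ ≤ Y * w + e := by
  rcases hμ with hμ | ⟨ha', hμ⟩
  · nlinarith [mul_le_mul_of_nonneg_left ha hY]
  · nlinarith [mul_le_mul_of_nonneg_left ha' hY]

section WeightedPot

variable {n X s i₀ : ℕ} {M : ℕ → ℕ → ℕ}

theorem weightedPot_sub_le (hs : s ≤ n) (hM : M i₀ s ≤ X) {p q : GV} {w e : ℕ}
    (hw : dirW n n (fun _ _ => true) p q = w ∨ dirW n n (fun _ _ => true) q p = w)
    (he : p = .v i₀ s → q = .x i₀ s → M i₀ s ≤ e) :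
    weightedPot n X s i₀ (M i₀ s) q - weightedPot n X s i₀ (M i₀ s) p ≤ X ^ 2 * w + e := by
  have hψ : gridPot n s q - gridPot n s p ≤ w := by
    rcases hw with h | h
    · exact (le_abs_self _).trans (abs_gridPot_sub_le hs h)
    · exact (le_abs_self _).trans (abs_sub_comm (gridPot n s q) _ ▸ abs_gridPot_sub_le hs h)
  have hMX : (M i₀ s : ℤ) ≤ X ^ 2 := by
    exact_mod_cast hM.trans (Nat.le_self_pow two_ne_zero X)
  set R := {q | AfterShortcut i₀ s q}
  have key : (X : ℤ) ^ 2 * (gridPot n s q - gridPot n s p) +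
      (R.indicator (fun _ => (M i₀ s : ℤ)) q - R.indicator (fun _ => (M i₀ s : ℤ)) p) ≤
      X ^ 2 * w + e := by
    refine mul_add_le_mul_add_of_lex (by positivity) (by positivity) hψ ?_
    by_cases hq : q ∈ R <;> by_cases hp : p ∈ R <;>
      simp only [Set.indicator_of_mem, Set.indicator_of_notMem, hq, hp, not_false_eq_true]
    · left; simp
    · by_cases hpq : p = .v i₀ s ∧ q = .x i₀ s
      · left; have := he hpq.1 hpq.2; omega
      · right; exact ⟨gridPot_sub_add_one_le_of_enter hw hq hp hpq, by simpa using hMX⟩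
    · left; simp
    · left; simp
  unfold weightedPot
  linarith

theorem toNat_abs_weightedPot_sub_le (hX : X ≠ 0) (hs : s ≤ n) (hM : M i₀ s ≤ X) (p q : GV) :
    (|weightedPot n X s i₀ (M i₀ s) q - weightedPot n X s i₀ (M i₀ s) p|.toNat : ℕ∞) ≤
      dirWt n n X M p q := by
  obtain ⟨e, hdir, he⟩ := dirWt_eq_add n X M p q
  rw [hdir]
  cases hw : dirW n n (fun _ _ => true) p q with
  | top => simp [hX]
  | coe w =>
    have h₁ := weightedPot_sub_le hs hM (Or.inl hw) fun hp hq => (he _ _ hp hq).ge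
    have h₂ := weightedPot_sub_le (e := e) hs hM (Or.inr hw) fun hq hp => by
      subst hp hq; simp [dirW] at hw
    rw [show (X : ℕ∞) ^ 2 * w + e = ((X ^ 2 * w + e : ℕ) : ℕ∞) by push_cast; rfl]
    exact Nat.cast_le.mpr (Int.toNat_le.mpr (by push_cast; exact abs_sub_le_iff.mpr ⟨h₁, h₂⟩))

end WeightedPot

section UpperBound

variable {n X s : ℕ} {M : ℕ → ℕ → ℕ}

theorem gdist_le_of_dirWt_eq {p q : GV} {c : ℕ} (h : dirWt n n X M p q = c) :
    gdist (wgridW n n X M) p q ≤ c :=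
  h ▸ (gdist_le_weight _ p q).trans (min_le_left _ _)

theorem gdist_a_v_le (hs : 1 ≤ s) (hsn : s ≤ n) :
    ∀ r, r + 1 ≤ n →
      gdist (wgridW n n X M) (.a s) (.v (r + 1) s) ≤ ((X ^ 2 * (2 * s * (r + 1) - 1) : ℕ) : ℕ∞)
  | 0, _ => gdist_le_of_dirWt_eq (by simp [dirWt, dirW, hs, hsn])
  | r + 1, hr => by
    have h₁ := gdist_a_v_le hs hsn r (by omega)
    have h₂ : gdist (wgridW n n X M) (.v (r + 1) s) (.u (r + 1) s) ≤ ((X ^ 2 : ℕ) : ℕ∞) :=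
      gdist_le_of_dirWt_eq (by simp [dirWt, dirW, hs, hsn]; omega)
    have h₃ : gdist (wgridW n n X M) (.u (r + 1) s) (.v (r + 1 + 1) s) ≤
        ((X ^ 2 * (2 * s - 1) : ℕ) : ℕ∞) :=
      gdist_le_of_dirWt_eq (by simp [dirWt, dirW, hs, hsn]; omega)
    calc _ ≤ _ := (gdist_triangle _ _ (.u (r + 1) s) _).trans
            (add_le_add_left (gdist_triangle _ _ (.v (r + 1) s) _) _)
      _ ≤ _ := add_le_add (add_le_add h₁ h₂) h₃
      _ = _ := by
        norm_cast
        apply Nat.cast_injective (R := ℤ)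
        have : 1 ≤ s * (r + 1) := Nat.one_le_iff_ne_zero.mpr (by positivity)
        push_cast [Nat.cast_sub (show 1 ≤ 2 * s by omega),
          Nat.cast_sub (show 1 ≤ 2 * s * (r + 1) by nlinarith),
          Nat.cast_sub (show 1 ≤ 2 * s * (r + 1 + 1) by nlinarith)]
        ring

theorem gdist_w_b_le {i : ℕ} (hi : 1 ≤ i) (hin : i ≤ n) :
    ∀ k c, c + k = n → 1 ≤ c →
      gdist (wgridW n n X M) (.w i c) (.b i) ≤ ((X ^ 2 * (2 * n * k + 2 * n - 2) : ℕ) : ℕ∞)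
  | 0, c, hc, hc₁ => by
    obtain rfl : c = n := hc
    exact gdist_le_of_dirWt_eq (by simp [dirWt, dirW, hi, hin, hc₁])
  | k + 1, c, hc, hc₁ => by
    have h₁ : gdist (wgridW n n X M) (.w i c) (.u i (c + 1)) ≤
        ((X ^ 2 * (2 * n - 2) : ℕ) : ℕ∞) :=
      gdist_le_of_dirWt_eq (by simp [dirWt, dirW, hi, hin, hc₁]; omega)
    have h₂ : gdist (wgridW n n X M) (.u i (c + 1)) (.w i (c + 1)) ≤ ((X ^ 2 * 2 : ℕ) : ℕ∞) :=
      gdist_le_of_dirWt_eq (by simp [dirWt, dirW, hi, hin]; omega)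
    have h₃ : gdist (wgridW n n X M) (.w i (c + 1)) (.b i) ≤ _ :=
      gdist_w_b_le hi hin k (c + 1) (by omega) (by omega)
    calc _ ≤ _ := (gdist_triangle _ _ (.u i (c + 1)) _).trans
            (add_le_add le_rfl (gdist_triangle _ _ (.w i (c + 1)) _))
      _ ≤ _ := add_le_add h₁ (add_le_add h₂ h₃)
      _ = _ := by
        norm_cast
        apply Nat.cast_injective (R := ℤ)
        push_cast [Nat.cast_sub (show 2 ≤ 2 * n by omega),
          Nat.cast_sub (show 2 ≤ 2 * n * k + 2 * n by nlinarith),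
          Nat.cast_sub (show 2 ≤ 2 * n * (k + 1) + 2 * n by nlinarith)]
        ring

theorem gdist_a_b_le {i : ℕ} (hs : 1 ≤ s) (hsn : s ≤ n) (hi : 1 ≤ i) (hin : i ≤ n) :
    gdist (wgridW n n X M) (.a s) (.b i) ≤
      ((X ^ 2 * (2 * i * s + 2 * n * (n + 1 - s) - 1) + M i s : ℕ) : ℕ∞) := by
  obtain ⟨r, rfl⟩ : ∃ r, i = r + 1 := ⟨i - 1, by omega⟩
  have h₁ := gdist_a_v_le (X := X) (M := M) hs hsn r hin
  have h₂ : gdist (wgridW n n X M) (.v (r + 1) s) (.x (r + 1) s) ≤ ((X ^ 2 + M (r + 1) s : ℕ) : ℕ∞) :=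
    gdist_le_of_dirWt_eq (by simp [dirWt, dirW, hs, hsn, hin])
  have h₃ : gdist (wgridW n n X M) (.x (r + 1) s) (.w (r + 1) s) ≤ ((X ^ 2 : ℕ) : ℕ∞) :=
    gdist_le_of_dirWt_eq (by simp [dirWt, dirW, hs, hsn, hin])
  have h₄ := gdist_w_b_le (X := X) (M := M) hi hin (n - s) s (by omega) hs
  calc _ ≤ _ := (gdist_triangle _ _ (.v (r + 1) s) _).trans <| add_le_add le_rfl <|
          (gdist_triangle _ _ (.x (r + 1) s) _).trans
            (add_le_add le_rfl (gdist_triangle _ _ (.w (r + 1) s) _))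
    _ ≤ _ := add_le_add h₁ (add_le_add h₂ (add_le_add h₃ h₄))
    _ = _ := by
      norm_cast
      apply Nat.cast_injective (R := ℤ)
      have : 1 ≤ s * (r + 1) := Nat.one_le_iff_ne_zero.mpr (by positivity)
      push_cast [Nat.cast_sub hsn, Nat.cast_sub (show s ≤ n + 1 by omega),
        Nat.cast_sub (show 1 ≤ 2 * s * (r + 1) by nlinarith),
        Nat.cast_sub (show 2 ≤ 2 * n * (n - s) + 2 * n by nlinarith),
        Nat.cast_sub (show 1 ≤ 2 * (r + 1) * s + 2 * n * (n + 1 - s) by nlinarith)]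
      ring

end UpperBound

theorem gdist_a_b {n X s i : ℕ} {M : ℕ → ℕ → ℕ} (hX : X ≠ 0) (hs : 1 ≤ s) (hsn : s ≤ n)
    (hi : 1 ≤ i) (hin : i ≤ n) (hM : M i s ≤ X) :
    gdist (wgridW n n X M) (.a s) (.b i) =
      ((X ^ 2 * (2 * i * s + 2 * n * (n + 1 - s) - 1) + M i s : ℕ) : ℕ∞) := by
  refine le_antisymm (gdist_a_b_le hs hsn hi hin) ?_
  have h := toNat_sub_le_gdist _ (weightedPot n X s i (M i s))
    (toNat_sub_le_symW _ _ (toNat_abs_weightedPot_sub_le hX hsn hM)) (.a s) (.b i)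
  have hdiff : weightedPot n X s i (M i s) (.b i) - weightedPot n X s i (M i s) (.a s) =
      ((X ^ 2 * (2 * i * s + 2 * n * (n + 1 - s) - 1) + M i s : ℕ) : ℤ) := by
    have : 1 ≤ i * s := Nat.one_le_iff_ne_zero.mpr (by positivity)
    have hb : levelPot n s i (n + 1) = 2 * s * i + 2 * n * (n + 1 - s : ℤ) := by
      simp [levelPot, show ¬ n + 1 ≤ s by omega]
    have ha : levelPot n s 0 s = 0 := by simp [levelPot]
    simp only [weightedPot, gridPot, hb, ha,
      Set.indicator_of_mem (show GV.b i ∈ {q | AfterShortcut i s q} from rfl),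
      Set.indicator_of_notMem (show GV.a s ∉ {q | AfterShortcut i s q} from id)]
    push_cast [Nat.cast_sub (show s ≤ n + 1 by omega),
      Nat.cast_sub (show 1 ≤ 2 * i * s + 2 * n * (n + 1 - s) by nlinarith)]
    ring
  rwa [hdiff, Int.toNat_natCast] at h

theorem entry_eq_of_gdist_eq {n X s i : ℕ} {M M' : ℕ → ℕ → ℕ} (hX : X ≠ 0) (hs : 1 ≤ s)
    (hsn : s ≤ n) (hi : 1 ≤ i) (hin : i ≤ n) (hM : M i s ≤ X) (hM' : M' i s ≤ X)
    (h : gdist (wgridW n n X M) (.a s) (.b i) = gdist (wgridW n n X M') (.a s) (.b i)) :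
    M i s = M' i s := by
  rw [gdist_a_b hX hs hsn hi hin hM, gdist_a_b hX hs hsn hi hin hM'] at h
  exact Nat.add_left_cancel (Nat.cast_injective h)

-- The top digit `1` makes `Nat.ofDigits 2` injective on lists of all lengths.
def bitsWithLeadingOne (l : List Bool) : List ℕ := l.map Bool.toNat ++ [1]

theorem lt_two_of_mem_bitsWithLeadingOne (l : List Bool) :
    ∀ d ∈ bitsWithLeadingOne l, d < 2 := by
  simp only [bitsWithLeadingOne, List.mem_append, List.mem_map, List.mem_singleton]
  rintro d (⟨b, -, rfl⟩ | rfl)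
  exacts [Bool.toNat_lt b, one_lt_two]

theorem ofDigits_bitsWithLeadingOne_injective :
    Function.Injective fun l => Nat.ofDigits 2 (bitsWithLeadingOne l) := by
  intro l₁ l₂ h
  have hdig : ∀ l, Nat.digits 2 (Nat.ofDigits 2 (bitsWithLeadingOne l)) = bitsWithLeadingOne l :=
    fun l => Nat.digits_ofDigits 2 one_lt_two _ (lt_two_of_mem_bitsWithLeadingOne l)
      (by simp [bitsWithLeadingOne])
  have := congrArg (Nat.digits 2) h
  rw [hdig, hdig] at this
  simp only [bitsWithLeadingOne, List.append_cancel_right_eq] at this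
  exact List.map_injective_iff.mpr (fun a b h => by cases a <;> cases b <;> simp_all) this

theorem ofDigits_bitsWithLeadingOne_lt (l : List Bool) :
    Nat.ofDigits 2 (bitsWithLeadingOne l) < 2 ^ (l.length + 1) := by
  simpa [bitsWithLeadingOne] using
    Nat.ofDigits_lt_base_pow_length one_lt_two (lt_two_of_mem_bitsWithLeadingOne l)

theorem card_le_of_injective_bounded_lists {α ι : Type*} [Fintype α] [Fintype ι] {L : ℕ}
    (g : α → ι → List Bool) (hg : Function.Injective g) (hL : ∀ a i, (g a i).length ≤ L) :
    Fintype.card α ≤ 2 ^ ((L + 1) * Fintype.card ι) := by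
  classical
  let G : α → ι → Fin (2 ^ (L + 1)) := fun a i =>
    ⟨_, (ofDigits_bitsWithLeadingOne_lt (g a i)).trans_le
      (Nat.pow_le_pow_right two_pos (by simpa using hL a i))⟩
  have hG : Function.Injective G := fun a b h => hg <| funext fun i =>
    ofDigits_bitsWithLeadingOne_injective (congrArg Fin.val (congrFun h i))
  simpa [pow_mul] using Fintype.card_le_of_injective G hG

theorem half_mul_logb_sub_one_le {n X L : ℕ} (hn : 1 ≤ n)
    (h : (X + 1) ^ (n ^ 2) ≤ 2 ^ (2 * n * (L + 1))) :
    (n : ℝ) / 2 * Real.logb 2 ((X : ℝ) + 1) - 1 ≤ L := by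
  have h' : ((X : ℝ) + 1) ^ (n ^ 2) ≤ (2 : ℝ) ^ (2 * n * (L + 1)) := by exact_mod_cast h
  have hlog := Real.logb_le_logb_of_le (b := 2) one_lt_two (by positivity) h'
  rw [Real.logb_pow, Real.logb_pow, Real.logb_self_eq_one one_lt_two] at hlog
  have hn' : (1 : ℝ) ≤ n := by exact_mod_cast hn
  push_cast at hlog
  have : (n : ℝ) * Real.logb 2 ((X : ℝ) + 1) ≤ 2 * (L + 1) :=
    le_of_mul_le_mul_left (by linarith) (by positivity : (0 : ℝ) < n)
  linarith

def matrixOfFin {n X : ℕ} (A : Fin n → Fin n → Fin (X + 1)) (i j : ℕ) : ℕ :=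
  if h : 1 ≤ i ∧ i ≤ n ∧ 1 ≤ j ∧ j ≤ n then A ⟨i - 1, by omega⟩ ⟨j - 1, by omega⟩ else 0

theorem matrixOfFin_le {n X : ℕ} (A : Fin n → Fin n → Fin (X + 1)) (i j : ℕ) :
    matrixOfFin A i j ≤ X := by
  unfold matrixOfFin
  split_ifs
  exacts [Fin.is_le _, Nat.zero_le _]

theorem matrixOfFin_succ {n X : ℕ} (A : Fin n → Fin n → Fin (X + 1)) (i j : Fin n) :
    matrixOfFin A (i + 1) (j + 1) = A i j := by
  simp [matrixOfFin]

/-- distance-labeling lower bound.  Fix `n ≥ 1` and `X ≥ 2`, and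
consider the family of weighted grid embeddings `G_M` of all `n × n` matrices `M` with
integer entries in `{0, …, X}`.  Suppose `ℓ` assigns to each such `G_M` and each vertex a
binary string of length at most `L`, and `f` decodes distances:
`f (ℓ M u) (ℓ M v) = d_{G_M}(u, v)` for every such `M` and all vertices `u, v`.
Then `2^(2n(L+1)) ≥ (X+1)^(n²)`; in particular `L ≥ (n/2)·log₂(X+1) − 1`. -/
theorem distance_labeling_lower_bound (n X L : ℕ) (hn : 1 ≤ n) (hX : 2 ≤ X)
    (ℓ : (ℕ → ℕ → ℕ) → GV → List Bool)
    (hL : ∀ M : ℕ → ℕ → ℕ, (∀ i j, 1 ≤ i → i ≤ n → 1 ≤ j → j ≤ n → M i j ≤ X) →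
      ∀ v : GV, (ℓ M v).length ≤ L)
    (f : List Bool → List Bool → ℕ∞)
    (hf : ∀ M : ℕ → ℕ → ℕ, (∀ i j, 1 ≤ i → i ≤ n → 1 ≤ j → j ≤ n → M i j ≤ X) →
      ∀ u v : GV, f (ℓ M u) (ℓ M v) = gdist (wgridW n n X M) u v) :
    (X + 1) ^ (n ^ 2) ≤ 2 ^ (2 * n * (L + 1)) ∧
      ((n : ℝ) / 2) * Real.logb 2 ((X : ℝ) + 1) - 1 ≤ (L : ℝ) := by
  have hA : ∀ A : Fin n → Fin n → Fin (X + 1), ∀ i j, 1 ≤ i → i ≤ n → 1 ≤ j → j ≤ n →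
      matrixOfFin A i j ≤ X := fun A i j _ _ _ _ => matrixOfFin_le A i j
  let labels (A : Fin n → Fin n → Fin (X + 1)) : Fin n ⊕ Fin n → List Bool :=
    Sum.elim (fun j => ℓ (matrixOfFin A) (.a (j + 1))) (fun i => ℓ (matrixOfFin A) (.b (i + 1)))
  have hlabels : Function.Injective labels := by
    intro A B hAB
    funext i j
    have hd : gdist (wgridW n n X (matrixOfFin A)) (.a (j + 1)) (.b (i + 1)) =
        gdist (wgridW n n X (matrixOfFin B)) (.a (j + 1)) (.b (i + 1)) := by
      rw [← hf _ (hA A), ← hf _ (hA B)]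
      exact congrArg₂ f (congrFun hAB (.inl j)) (congrFun hAB (.inr i))
    have := entry_eq_of_gdist_eq (by omega) (by omega) j.isLt (by omega) i.isLt
      (matrixOfFin_le A _ _) (matrixOfFin_le B _ _) hd
    rw [matrixOfFin_succ, matrixOfFin_succ] at this
    exact Fin.ext this
  have hcard := card_le_of_injective_bounded_lists labels hlabels
    fun A k => by cases k <;> exact hL _ (hA A) _
  have hcount : (X + 1) ^ (n ^ 2) ≤ 2 ^ (2 * n * (L + 1)) := by
    simp only [Fintype.card_fun, Fintype.card_fin, Fintype.card_sum] at hcard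
    rwa [← pow_mul, ← sq, show (L + 1) * (n + n) = 2 * n * (L + 1) by ring] at hcard
  exact ⟨hcount, half_mul_logb_sub_one_le hn hcount⟩
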